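/- Fix μ ∈ ℝ, c ∈ (0,1), and let s > 0 be such that N(μ,1)({y : |y − μ| ≥ s}) = c. Then for every measurable set S ⊆ ℝ with N(μ,1)(S) = c, the truncated second moment satisfies E_{y ~ N(μ,1,S)}[(y − μ)²] ≤ E_{y ~ N(μ,1,S₀)}[(y − μ)²], where S₀ = {y : |y − μ| ≥ s}; i.e., among all truncation sets of a given Gaussian mass, the symmetric two-sided tail set maximizes the second moment about the mean. -/

import Mathlib

open MeasureTheory ProbabilityTheory Real
open scoped RealInnerProductSpace ENNReal

/-- The survival probability `α(μ; S) = N(μ,1)(S)`. -/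
noncomputable def survival (μ : ℝ) (S : Set ℝ) : ℝ :=
  (gaussianReal μ 1 S).toReal

/-- The truncated Gaussian `N(μ,1,S)`, i.e. `N(μ,1)` conditioned on `S`. -/
noncomputable def truncGaussian (μ : ℝ) (S : Set ℝ) : Measure ℝ :=
  (gaussianReal μ 1)[|S]

/-! Bathtub principle: moving the mass of `S \ T`, where `f ≤ t`, onto the equally heavy set
`T \ S`, where `f ≥ t`, can only increase `∫ f`. For `f y = (y - μ) ^ 2` and `t = s ^ 2` the set
`T = {s ≤ |y - μ|}` has this property, and conditioning on sets of equal mass divides both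
integrals by the same constant. -/

section Bathtub

variable {α : Type*} [MeasurableSpace α] {ν : Measure α} {S T : Set α}

lemma measureReal_sdiff_comm_of_measureReal_eq (hS : MeasurableSet S) (hT : MeasurableSet T)
    (hSfin : ν S ≠ ∞) (hTfin : ν T ≠ ∞) (hST : ν.real S = ν.real T) :
    ν.real (S \ T) = ν.real (T \ S) := by
  have hS' := measureReal_inter_add_sdiff₀ hT.nullMeasurableSet hSfin
  have hT' := measureReal_inter_add_sdiff₀ hS.nullMeasurableSet hTfin
  rw [Set.inter_comm] at hT'
  linarith

theorem setIntegral_le_setIntegral_of_measureReal_eq {f : α → ℝ} {t : ℝ}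
    (hS : MeasurableSet S) (hT : MeasurableSet T) (hSfin : ν S ≠ ∞) (hTfin : ν T ≠ ∞)
    (hST : ν.real S = ν.real T) (hfS : IntegrableOn f S ν) (hfT : IntegrableOn f T ν)
    (hle : ∀ x ∈ S \ T, f x ≤ t) (hge : ∀ x ∈ T \ S, t ≤ f x) :
    ∫ x in S, f x ∂ν ≤ ∫ x in T, f x ∂ν := by
  have hSTfin : ν (S \ T) ≠ ∞ := measure_ne_top_of_subset Set.sdiff_subset hSfin
  have hTSfin : ν (T \ S) ≠ ∞ := measure_ne_top_of_subset Set.sdiff_subset hTfin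
  calc ∫ x in S, f x ∂ν = ∫ x in S ∩ T, f x ∂ν + ∫ x in S \ T, f x ∂ν :=
        (integral_inter_add_sdiff hT hfS).symm
    _ ≤ ∫ x in S ∩ T, f x ∂ν + ∫ _ in S \ T, t ∂ν :=
        add_le_add le_rfl (setIntegral_mono_on (hfS.mono_set Set.sdiff_subset)
          (integrableOn_const hSTfin) (hS.diff hT) hle)
    _ = ∫ x in S ∩ T, f x ∂ν + ∫ _ in T \ S, t ∂ν := by
        rw [setIntegral_const, setIntegral_const,
          measureReal_sdiff_comm_of_measureReal_eq hS hT hSfin hTfin hST]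
    _ ≤ ∫ x in T ∩ S, f x ∂ν + ∫ x in T \ S, f x ∂ν := by
        rw [Set.inter_comm]
        exact add_le_add le_rfl (setIntegral_mono_on (integrableOn_const hTSfin)
          (hfT.mono_set Set.sdiff_subset) (hT.diff hS) hge)
    _ = ∫ x in T, f x ∂ν := integral_inter_add_sdiff hS hfT

end Bathtub

lemma integral_cond_eq_inv_mul_setIntegral {α : Type*} [MeasurableSpace α] (ν : Measure α)
    (S : Set α) (f : α → ℝ) : ∫ x, f x ∂ν[|S] = (ν.real S)⁻¹ * ∫ x in S, f x ∂ν := by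
  rw [ProbabilityTheory.cond, integral_smul_measure, ENNReal.toReal_inv, smul_eq_mul,
    measureReal_def]

lemma integrable_sq_sub_gaussianReal (μ : ℝ) (v : NNReal) :
    Integrable (fun y : ℝ => (y - μ) ^ 2) (gaussianReal μ v) :=
  ((memLp_id_gaussianReal 2).sub (memLp_const μ)).integrable_sq

theorem stmt17 (μ c s : ℝ) (hs : 0 < s)
    (htail : (gaussianReal μ 1 {y : ℝ | s ≤ |y - μ|}).toReal = c)
    (S : Set ℝ) (hS : MeasurableSet S)
    (hSmass : (gaussianReal μ 1 S).toReal = c) :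
    ∫ y, (y - μ) ^ 2 ∂(truncGaussian μ S) ≤
      ∫ y, (y - μ) ^ 2 ∂(truncGaussian μ {y : ℝ | s ≤ |y - μ|}) := by
  set T := {y : ℝ | s ≤ |y - μ|}
  have hT : MeasurableSet T := measurableSet_le measurable_const (measurable_id.sub_const μ).abs
  have hST : (gaussianReal μ 1).real S = (gaussianReal μ 1).real T := hSmass.trans htail.symm
  have hint := integrable_sq_sub_gaussianReal μ 1
  rw [truncGaussian, truncGaussian, integral_cond_eq_inv_mul_setIntegral,
    integral_cond_eq_inv_mul_setIntegral, hST]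
  refine mul_le_mul_of_nonneg_left ?_ (inv_nonneg.2 measureReal_nonneg)
  refine setIntegral_le_setIntegral_of_measureReal_eq (t := s ^ 2) hS hT (measure_ne_top _ _)
    (measure_ne_top _ _) hST hint.integrableOn hint.integrableOn ?_ ?_
  · rintro y ⟨-, hy⟩
    have hy : |y - μ| < s := not_le.1 hy
    simpa only [sq_abs] using (pow_lt_pow_left₀ hy (abs_nonneg _) two_ne_zero).le
  · rintro y ⟨hy, -⟩
    simpa only [sq_abs] using pow_le_pow_left₀ hs.le hy 2
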